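/- arXiv:1803.01732 — 3 statements merged into one kernel-verified Lean document; each statement's English description precedes it below -/
import Mathlib

section
/- For every x < 0, the function u(x,y) = x·y·(x²+y²)·arg(x + y·i), viewed as a function of (x,y) ∈ ℝ², is not differentiable at the point (x, 0). -/
/-!
On the vertical line through `(x, 0)` the function is `y ↦ y · x (x² + y²) arg (x + y i)`.
For `x < 0` the point `x + y i` crosses the branch cut of `arg` as `y` crosses `0`, so the
difference quotient tends to `π x³` from above and to `-π x³` from below; a differentiable
function would have a single limit, its derivative.
-/

open Filter Topology Complex Real

theorem not_differentiableAt_smul_of_tendsto_ne {E : Type*} [NormedAddCommGroup E]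
    [NormedSpace ℝ E] {h : ℝ → E} {l₁ l₂ : E} (h₁ : Tendsto h (𝓝[>] 0) (𝓝 l₁))
    (h₂ : Tendsto h (𝓝[<] 0) (𝓝 l₂)) (hne : l₁ ≠ l₂) :
    ¬ DifferentiableAt ℝ (fun y => y • h y) 0 := by
  intro hd
  have hslope : Tendsto h (𝓝[≠] 0) (𝓝 (deriv (fun y => y • h y) 0)) := by
    refine hd.hasDerivAt.tendsto_slope.congr' ?_
    filter_upwards [self_mem_nhdsWithin] with y hy
    rw [slope_def_module, sub_zero, zero_smul, sub_zero, smul_smul, inv_mul_cancel₀ hy, one_smul]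
  exact hne <| (tendsto_nhds_unique (hslope.mono_left (nhdsGT_le_nhdsNE 0)) h₁).symm.trans
    (tendsto_nhds_unique (hslope.mono_left (nhdsLT_le_nhdsNE 0)) h₂)

theorem tendsto_ofReal_add_mul_I_nhds (x : ℝ) :
    Tendsto (fun y : ℝ => (x : ℂ) + y * I) (𝓝 0) (𝓝 (x : ℂ)) :=
  (by fun_prop : Continuous fun y : ℝ => (x : ℂ) + y * I).tendsto' 0 _ (by simp)

theorem tendsto_arg_ofReal_add_mul_I_nhdsGT {x : ℝ} (hx : x < 0) :
    Tendsto (fun y : ℝ => arg (x + y * I)) (𝓝[>] 0) (𝓝 π) := by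
  refine (tendsto_arg_nhdsWithin_im_nonneg_of_re_neg_of_im_zero (by simpa using hx)
    (ofReal_im x)).comp (tendsto_nhdsWithin_iff.2 ⟨?_, ?_⟩)
  · exact (tendsto_ofReal_add_mul_I_nhds x).mono_left nhdsWithin_le_nhds
  · filter_upwards [self_mem_nhdsWithin] with y hy
    simpa using le_of_lt hy

theorem tendsto_arg_ofReal_add_mul_I_nhdsLT {x : ℝ} (hx : x < 0) :
    Tendsto (fun y : ℝ => arg (x + y * I)) (𝓝[<] 0) (𝓝 (-π)) := by
  refine (tendsto_arg_nhdsWithin_im_neg_of_re_neg_of_im_zero (by simpa using hx)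
    (ofReal_im x)).comp (tendsto_nhdsWithin_iff.2 ⟨?_, ?_⟩)
  · exact (tendsto_ofReal_add_mul_I_nhds x).mono_left nhdsWithin_le_nhds
  · filter_upwards [self_mem_nhdsWithin] with y hy
    simpa using hy

/-- For every `x < 0`, the function `u(x,y) = x·y·(x²+y²)·arg(x + y·i)` on `ℝ²`
is not differentiable at the point `(x, 0)`. -/
theorem not_differentiableAt_xy_sq_mul_arg {x : ℝ} (hx : x < 0) :
    ¬ DifferentiableAt ℝ
        (fun p : ℝ × ℝ =>
          p.1 * p.2 * (p.1 ^ 2 + p.2 ^ 2) *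
            Complex.arg ((p.1 : ℂ) + (p.2 : ℂ) * Complex.I))
        (x, 0) := by
  intro hd
  set c : ℝ → ℝ := fun y => x * (x ^ 2 + y ^ 2) with hc
  have hline : DifferentiableAt ℝ (fun y : ℝ => y • (c y * arg (x + y * I))) 0 := by
    have hcomp := hd.comp (0 : ℝ) ((differentiableAt_const x).prodMk differentiableAt_id)
    refine hcomp.congr_of_eventuallyEq (Eventually.of_forall fun y => ?_)
    simp only [hc, smul_eq_mul, Function.comp_apply]
    ring
  have hc0 : Tendsto c (𝓝 0) (𝓝 (x ^ 3)) :=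
    (by fun_prop : Continuous c).tendsto' 0 _ (by simp only [hc]; ring)
  refine not_differentiableAt_smul_of_tendsto_ne
    ((hc0.mono_left nhdsWithin_le_nhds).mul (tendsto_arg_ofReal_add_mul_I_nhdsGT hx))
    ((hc0.mono_left nhdsWithin_le_nhds).mul (tendsto_arg_ofReal_add_mul_I_nhdsLT hx)) ?_ hline
  have hx3 : x ^ 3 < 0 := Odd.pow_neg (by decide) hx
  nlinarith [mul_neg_of_neg_of_pos hx3 pi_pos]
end

section
/- For every (x,y) ∈ ℝ² with y ≠ 0, the function u(x,y) = x·y·(x²+y²)·arg(x + y·i) satisfies the Laplacian identity ∂²u/∂x² + ∂²u/∂y² = 12·x·y·arg(x + y·i) + 2·(x² − y²), where the second partial derivatives are iterated one-dimensional derivatives (deriv applied twice in each variable). -/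
/-!
Away from the real axis `arg = Im ∘ log`, so along horizontal and vertical lines
`∂ₓ arg = -y / (x² + y²)` and `∂_y arg = x / (x² + y²)`. The polynomial factor
`p = x y (x² + y²)` cancels these denominators, so the first partials are `pₓ · arg - x y²` and
`p_y · arg + x² y`. Differentiating once more, `pₓₓ + p_yy = 12 x y` produces the `arg` term, and
`pₓ ∂ₓ arg + p_y ∂_y arg = (x⁴ - y⁴) / (x² + y²) = x² - y²` plus the derivatives `-y²`, `x²` of the
polynomial remainders gives `2 (x² - y²)`.
-/

open Complex

theorem HasDerivAt.arg_of_mem_slitPlane {f : ℝ → ℂ} {f' : ℂ} {t : ℝ} (hf : HasDerivAt f f' t)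
    (ht : f t ∈ slitPlane) : HasDerivAt (fun s => arg (f s)) (f' / f t).im t := by
  simpa only [Function.comp_def, imCLM_apply, log_im] using
    imCLM.hasFDerivAt.comp_hasDerivAt t (hf.clog_real ht)

theorem mem_slitPlane_ofReal_add_mul_I (x : ℝ) {y : ℝ} (hy : y ≠ 0) :
    (x + y * I : ℂ) ∈ slitPlane :=
  mem_slitPlane_iff.2 (Or.inr (by simpa using hy))

theorem hasDerivAt_arg_ofReal_add_mul_I_left {y : ℝ} (hy : y ≠ 0) (a : ℝ) :
    HasDerivAt (fun a : ℝ => arg (a + y * I)) (-y / (a ^ 2 + y ^ 2)) a := by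
  have hline : HasDerivAt (fun a : ℝ => (a : ℂ) + y * I) 1 a :=
    (hasDerivAt_id a).ofReal_comp.add_const _
  convert hline.arg_of_mem_slitPlane (mem_slitPlane_ofReal_add_mul_I a hy) using 1
  simp [normSq, sq]

theorem hasDerivAt_arg_ofReal_add_mul_I_right (x : ℝ) {b : ℝ} (hb : b ≠ 0) :
    HasDerivAt (fun b : ℝ => arg (x + b * I)) (x / (x ^ 2 + b ^ 2)) b := by
  have hline : HasDerivAt (fun b : ℝ => (x : ℂ) + b * I) I b := by
    simpa using ((hasDerivAt_id b).ofReal_comp.mul_const I).const_add (x : ℂ)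
  convert hline.arg_of_mem_slitPlane (mem_slitPlane_ofReal_add_mul_I x hb) using 1
  simp [div_im, normSq, sq]

noncomputable def xyNormSqArg (x y : ℝ) : ℝ := x * y * (x ^ 2 + y ^ 2) * arg (x + y * I)

theorem hasDerivAt_xyNormSqArg_left {y : ℝ} (hy : y ≠ 0) (a : ℝ) :
    HasDerivAt (xyNormSqArg · y) ((3 * a ^ 2 * y + y ^ 3) * arg (a + y * I) - a * y ^ 2) a := by
  have hpoly : HasDerivAt (fun a : ℝ => a * y * (a ^ 2 + y ^ 2)) (3 * a ^ 2 * y + y ^ 3) a :=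
    (((hasDerivAt_id' a).mul_const y).mul ((hasDerivAt_pow 2 a).add_const (y ^ 2))).congr_deriv
      (by push_cast; ring)
  refine (hpoly.mul (hasDerivAt_arg_ofReal_add_mul_I_left hy a)).congr_deriv ?_
  have : a ^ 2 + y ^ 2 ≠ 0 := by positivity
  field_simp
  ring

theorem hasDerivAt_xyNormSqArg_right (x : ℝ) {b : ℝ} (hb : b ≠ 0) :
    HasDerivAt (xyNormSqArg x ·) ((3 * x * b ^ 2 + x ^ 3) * arg (x + b * I) + x ^ 2 * b) b := by
  have hpoly : HasDerivAt (fun b : ℝ => x * b * (x ^ 2 + b ^ 2)) (3 * x * b ^ 2 + x ^ 3) b :=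
    (((hasDerivAt_id' b).const_mul x).mul ((hasDerivAt_pow 2 b).const_add (x ^ 2))).congr_deriv
      (by push_cast; ring)
  refine (hpoly.mul (hasDerivAt_arg_ofReal_add_mul_I_right x hb)).congr_deriv ?_
  have : x ^ 2 + b ^ 2 ≠ 0 := by positivity
  field_simp

theorem deriv_deriv_xyNormSqArg_left (x : ℝ) {y : ℝ} (hy : y ≠ 0) :
    deriv (deriv (xyNormSqArg · y)) x =
      6 * x * y * arg (x + y * I) + (3 * x ^ 2 * y + y ^ 3) * (-y / (x ^ 2 + y ^ 2)) - y ^ 2 := by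
  have hderiv : deriv (xyNormSqArg · y) =
      fun a : ℝ => (3 * a ^ 2 * y + y ^ 3) * arg (a + y * I) - a * y ^ 2 :=
    funext fun a => (hasDerivAt_xyNormSqArg_left hy a).deriv
  have hpoly : HasDerivAt (fun a : ℝ => 3 * a ^ 2 * y + y ^ 3) (6 * x * y) x :=
    ((((hasDerivAt_pow 2 x).const_mul 3).mul_const y).add_const (y ^ 3)).congr_deriv
      (by push_cast; ring)
  rw [hderiv]
  exact ((hpoly.mul (hasDerivAt_arg_ofReal_add_mul_I_left hy x)).sub
    ((hasDerivAt_id' x).mul_const (y ^ 2))).deriv.trans (by simp)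

theorem deriv_deriv_xyNormSqArg_right (x : ℝ) {y : ℝ} (hy : y ≠ 0) :
    deriv (deriv (xyNormSqArg x ·)) y =
      6 * x * y * arg (x + y * I) + (3 * x * y ^ 2 + x ^ 3) * (x / (x ^ 2 + y ^ 2)) + x ^ 2 := by
  have hderiv : deriv (xyNormSqArg x ·) =ᶠ[nhds y]
      fun b : ℝ => (3 * x * b ^ 2 + x ^ 3) * arg (x + b * I) + x ^ 2 * b := by
    filter_upwards [eventually_ne_nhds hy] with b hb
    exact (hasDerivAt_xyNormSqArg_right x hb).deriv
  have hpoly : HasDerivAt (fun b : ℝ => 3 * x * b ^ 2 + x ^ 3) (6 * x * y) y :=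
    (((hasDerivAt_pow 2 y).const_mul (3 * x)).add_const (x ^ 3)).congr_deriv (by push_cast; ring)
  rw [hderiv.deriv_eq]
  exact ((hpoly.mul (hasDerivAt_arg_ofReal_add_mul_I_right x hy)).add
    ((hasDerivAt_id' y).const_mul (x ^ 2))).deriv.trans (by simp)

/-- For `y ≠ 0`, the function `u(x,y) = x·y·(x²+y²)·arg(x + y·i)` satisfies
`∂²u/∂x² + ∂²u/∂y² = 12·x·y·arg(x + y·i) + 2·(x² − y²)`, second partials taken as
iterated one-dimensional derivatives. -/
theorem laplacian_xy_sq_mul_arg {x y : ℝ} (hy : y ≠ 0) :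
    deriv (deriv (fun a : ℝ =>
        a * y * (a ^ 2 + y ^ 2) * Complex.arg ((a : ℂ) + (y : ℂ) * Complex.I))) x +
      deriv (deriv (fun b : ℝ =>
        x * b * (x ^ 2 + b ^ 2) * Complex.arg ((x : ℂ) + (b : ℂ) * Complex.I))) y =
    12 * x * y * Complex.arg ((x : ℂ) + (y : ℂ) * Complex.I) + 2 * (x ^ 2 - y ^ 2) := by
  change deriv (deriv (xyNormSqArg · y)) x + deriv (deriv (xyNormSqArg x ·)) y = _
  rw [deriv_deriv_xyNormSqArg_left x hy, deriv_deriv_xyNormSqArg_right x hy]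
  have : x ^ 2 + y ^ 2 ≠ 0 := by positivity
  field_simp
  ring
end

section
/- Define h₁(x,y) = (1/10)·(−x − 1/2)·(8·x·y·(x²+y²)·arg(x + y·i) + x³) and h₂(x,z) = (1/10)·(−x − 1/2)·x³ − (4/5)·π·(−x − 1/2)·x³·|z|. Fix x < 0. Then: (i) the map y ↦ h₁(x,y) has right derivative at 0 equal to (4π/5)·(−x − 1/2)·x³ and left derivative at 0 equal to −(4π/5)·(−x − 1/2)·x³; (ii) the map z ↦ h₂(x,z) has right derivative at 0 equal to −(4π/5)·(−x − 1/2)·x³ and left derivative at 0 equal to (4π/5)·(−x − 1/2)·x³; and consequently (iii) the sum of the two jumps of normal derivatives, [(right − left derivative of h₁ in y at 0)] + [(right − left derivative of h₂ in z at 0)], equals 0. -/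
open Real

/-- The exact hydraulic head on fracture `Ω₁`. -/
noncomputable def h₁ (x y : ℝ) : ℝ :=
  (1 / 10) * (-x - 1 / 2) *
    (8 * x * y * (x ^ 2 + y ^ 2) * Complex.arg ((x : ℂ) + (y : ℂ) * Complex.I) + x ^ 3)

/-- The exact hydraulic head on fracture `Ω₂`. -/
noncomputable def h₂ (x z : ℝ) : ℝ :=
  (1 / 10) * (-x - 1 / 2) * x ^ 3 - (4 / 5) * π * (-x - 1 / 2) * x ^ 3 * |z|

/-!
Away from `y = 0`, `h₁ x y = h₁ x 0 + y · g y · arg (x + y i)` with `g` a polynomial, so the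
difference quotient at `0` is `g y · arg (x + y i)`. For `x < 0` the point `x` lies on the branch
cut of `arg`, whose one-sided limits there are `π` from above and `-π` from below; hence the
one-sided derivatives of `h₁` in `y` are `±g 0 · π`. Those of `h₂` in `z` come from `|z|`, and the
two jumps, `2π g 0` and `-2π g 0`, cancel.
-/

open Filter Topology Set

theorem hasDerivWithinAt_sub_mul_of_tendsto {𝕜 : Type*} [NontriviallyNormedField 𝕜]
    {u : 𝕜 → 𝕜} {s : Set 𝕜} {a L : 𝕜} (hu : Tendsto u (𝓝[s \ {a}] a) (𝓝 L)) :
    HasDerivWithinAt (fun y => (y - a) * u y) L s a := by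
  rw [hasDerivWithinAt_iff_tendsto_slope]
  refine hu.congr' ?_
  filter_upwards [self_mem_nhdsWithin] with y hy
  rw [slope_def_field, sub_self, zero_mul, sub_zero,
    mul_div_cancel_left₀ _ (sub_ne_zero.2 hy.2)]

theorem hasDerivWithinAt_abs_Ici_zero : HasDerivWithinAt (|·|) 1 (Ici (0 : ℝ)) 0 :=
  (hasDerivWithinAt_id 0 _).congr (fun _ hy => abs_of_nonneg hy) abs_zero

theorem hasDerivWithinAt_abs_Iic_zero : HasDerivWithinAt (|·|) (-1) (Iic (0 : ℝ)) 0 :=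
  (hasDerivWithinAt_neg 0 _).congr (fun _ hy => abs_of_nonpos hy) (by simp)

namespace Complex

theorem tendsto_arg_ofReal_add_mul_I_nhdsGT {x : ℝ} (hx : x < 0) :
    Tendsto (fun y : ℝ => arg (x + y * I)) (𝓝[>] 0) (𝓝 π) := by
  have hmaps : MapsTo (fun y : ℝ => (x + y * I : ℂ)) (Ioi 0) {z | 0 ≤ z.im} := fun y hy => by
    simpa using le_of_lt hy
  exact (tendsto_arg_nhdsWithin_im_nonneg_of_re_neg_of_im_zero (by simpa using hx) (by simp)).comp
    ((Continuous.continuousWithinAt (by fun_prop)).tendsto_nhdsWithin hmaps)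

theorem tendsto_arg_ofReal_add_mul_I_nhdsLT {x : ℝ} (hx : x < 0) :
    Tendsto (fun y : ℝ => arg (x + y * I)) (𝓝[<] 0) (𝓝 (-π)) := by
  have hmaps : MapsTo (fun y : ℝ => (x + y * I : ℂ)) (Iio 0) {z | z.im < 0} := fun y hy => by
    simpa using hy
  exact (tendsto_arg_nhdsWithin_im_neg_of_re_neg_of_im_zero (by simpa using hx) (by simp)).comp
    ((Continuous.continuousWithinAt (by fun_prop)).tendsto_nhdsWithin hmaps)

end Complex

theorem hasDerivWithinAt_h₁_zero {x L : ℝ} {s : Set ℝ}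
    (harg : Tendsto (fun y : ℝ => Complex.arg (x + y * Complex.I)) (𝓝[s \ {0}] 0) (𝓝 L)) :
    HasDerivWithinAt (h₁ x) (4 / 5 * (-x - 1 / 2) * x ^ 3 * L) s 0 := by
  have hpoly : Tendsto (fun y : ℝ => 4 / 5 * (-x - 1 / 2) * x * (x ^ 2 + y ^ 2))
      (𝓝[s \ {0}] 0) (𝓝 (4 / 5 * (-x - 1 / 2) * x ^ 3)) := by
    have hcont : Continuous fun y : ℝ => 4 / 5 * (-x - 1 / 2) * x * (x ^ 2 + y ^ 2) := by
      fun_prop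
    convert tendsto_nhdsWithin_of_tendsto_nhds (hcont.tendsto 0) using 2
    ring
  have hsplit : h₁ x = fun y : ℝ => (1 / 10) * (-x - 1 / 2) * x ^ 3 + (y - 0) *
      (4 / 5 * (-x - 1 / 2) * x * (x ^ 2 + y ^ 2) * Complex.arg (x + y * Complex.I)) := by
    funext y; simp only [h₁]; ring
  rw [hsplit]
  exact (hasDerivWithinAt_sub_mul_of_tendsto (hpoly.mul harg)).const_add _

theorem hasDerivWithinAt_h₂_zero (x : ℝ) {s : Set ℝ} {σ : ℝ}
    (habs : HasDerivWithinAt (|·|) σ s 0) :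
    HasDerivWithinAt (h₂ x) (-(4 / 5 * π * (-x - 1 / 2) * x ^ 3 * σ)) s 0 :=
  (habs.const_mul _).const_sub _

/-- For `x < 0`: (i) `y ↦ h₁(x,y)` has right derivative `(4π/5)·(−x−1/2)·x³` and left
derivative `−(4π/5)·(−x−1/2)·x³` at `0`; (ii) `z ↦ h₂(x,z)` has right derivative
`−(4π/5)·(−x−1/2)·x³` and left derivative `(4π/5)·(−x−1/2)·x³` at `0`; (iii) the sum of the
two jumps of normal derivatives vanishes. -/
theorem flux_balance_h₁_h₂ {x : ℝ} (hx : x < 0) :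
    HasDerivWithinAt (fun y => h₁ x y) ((4 * π / 5) * (-x - 1 / 2) * x ^ 3) (Set.Ici 0) 0 ∧
    HasDerivWithinAt (fun y => h₁ x y) (-((4 * π / 5) * (-x - 1 / 2) * x ^ 3)) (Set.Iic 0) 0 ∧
    HasDerivWithinAt (fun z => h₂ x z) (-((4 * π / 5) * (-x - 1 / 2) * x ^ 3)) (Set.Ici 0) 0 ∧
    HasDerivWithinAt (fun z => h₂ x z) ((4 * π / 5) * (-x - 1 / 2) * x ^ 3) (Set.Iic 0) 0 ∧
    (derivWithin (fun y => h₁ x y) (Set.Ici 0) 0 - derivWithin (fun y => h₁ x y) (Set.Iic 0) 0) +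
      (derivWithin (fun z => h₂ x z) (Set.Ici 0) 0 -
        derivWithin (fun z => h₂ x z) (Set.Iic 0) 0) = 0 := by
  have h₁_right := hasDerivWithinAt_h₁_zero (s := Ici 0)
    (by simpa only [Ici_sdiff_left] using Complex.tendsto_arg_ofReal_add_mul_I_nhdsGT hx)
  have h₁_left := hasDerivWithinAt_h₁_zero (s := Iic 0)
    (by simpa only [Iic_sdiff_right] using Complex.tendsto_arg_ofReal_add_mul_I_nhdsLT hx)
  have h₂_right := hasDerivWithinAt_h₂_zero x hasDerivWithinAt_abs_Ici_zero
  have h₂_left := hasDerivWithinAt_h₂_zero x hasDerivWithinAt_abs_Iic_zero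
  have hIci := uniqueDiffWithinAt_Ici (0 : ℝ)
  have hIic := uniqueDiffWithinAt_Iic (0 : ℝ)
  refine ⟨h₁_right.congr_deriv (by ring), h₁_left.congr_deriv (by ring),
    h₂_right.congr_deriv (by ring), h₂_left.congr_deriv (by ring), ?_⟩
  rw [h₁_right.derivWithin hIci, h₁_left.derivWithin hIic, h₂_right.derivWithin hIci,
    h₂_left.derivWithin hIic]
  ring
end
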